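/- arXiv:2405.11006 — 5 statements merged into one kernel-verified Lean document; each statement's English description precedes it below -/
import Mathlib

section
/- For every real number L > 0 and all integers m ≥ 1 and τ ≥ 1, ((1+L)^m − 1)/L · (1+L)^τ + τ·(1+L)^{τ−1} ≤ (τ+m)·(1+L)^{τ+m−1}. -/
/-- arithmetic core of the recursive-feasibility proof:
`((1+L)^m − 1)/L · (1+L)^τ + τ·(1+L)^{τ−1} ≤ (τ+m)·(1+L)^{τ+m−1}`
for `L > 0`, `m ≥ 1`, `τ ≥ 1`. -/
theorem stmt_5 (L : ℝ) (hL : 0 < L) (m τ : ℕ) (hm : 1 ≤ m) (hτ : 1 ≤ τ) :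
    ((1 + L) ^ m - 1) / L * (1 + L) ^ τ + (τ : ℝ) * (1 + L) ^ (τ - 1) ≤
      ((τ : ℝ) + (m : ℝ)) * (1 + L) ^ (τ + m - 1) := by
  set x : ℝ := 1 + L with hx
  have hx1 : 1 < x := by simp only [hx]; linarith
  have hx0 : (0:ℝ) < x := by linarith
  have hne : x ≠ 1 := ne_of_gt hx1
  have hL' : x - 1 = L := by ring
  have hgeo : (x ^ m - 1) / L = ∑ i ∈ Finset.range m, x ^ i := by
    rw [geom_sum_eq hne, hL']
  have hsum : ∑ i ∈ Finset.range m, x ^ i ≤ (m : ℝ) * x ^ (m - 1) := by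
    have := Finset.sum_le_card_nsmul (Finset.range m) (fun i => x ^ i)
      (x ^ (m - 1)) (fun i hi => by
        exact pow_le_pow_right₀ hx1.le (by
          have := Finset.mem_range.mp hi; omega))
    simpa [Finset.card_range, nsmul_eq_mul] using this
  have h1 : (x ^ m - 1) / L * x ^ τ ≤ (m : ℝ) * x ^ (τ + m - 1) := by
    rw [hgeo]
    have hpow : x ^ (m - 1) * x ^ τ = x ^ (τ + m - 1) := by
      rw [← pow_add]; congr 1; omega
    calc (∑ i ∈ Finset.range m, x ^ i) * x ^ τ
        ≤ ((m : ℝ) * x ^ (m - 1)) * x ^ τ :=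
          mul_le_mul_of_nonneg_right hsum (by positivity)
      _ = (m : ℝ) * x ^ (τ + m - 1) := by rw [mul_assoc, hpow]
  have h2 : (τ : ℝ) * x ^ (τ - 1) ≤ (τ : ℝ) * x ^ (τ + m - 1) := by
    apply mul_le_mul_of_nonneg_left _ (by positivity)
    exact pow_le_pow_right₀ hx1.le (by omega)
  linarith
end

section
/- Let n, p ∈ ℕ with n ≥ 1, let L > 0, and let g : ℝⁿ × ℝᵖ → ℝⁿ satisfy ‖g(x,u) − g(y,u)‖ ≤ L‖x − y‖ for all x, y, u; define F(e,u) = e + g(e,u). Let P be a real symmetric positive-definite n×n matrix with positive-definite square root √P, write ‖x‖_P = √(xᵀPx), and let λ denote the largest eigenvalue of √P. Let 0 < ε < ε_r, let N, m ∈ ℕ with 1 ≤ m ≤ N, and let η ≥ 0 satisfy η ≤ L(ε_r − ε)/(λ·((1+L)^N − 1)). Let (u_τ)_{τ=0}^{N−1} be inputs and let the nominal optimal trajectory (ẽ_τ)_{τ=0}^{N} satisfy ẽ_{τ+1} = F(ẽ_τ, u_τ) and ‖ẽ_N‖_P ≤ ε. Let the actual trajectory satisfy e_0 = ẽ_0 and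 e_{k+1} = F(e_k, u_k) + d_k with ‖d_k‖ ≤ η for k = 0, …, m−1. Define the candidate trajectory ē_0 = e_m and ē_{τ+1} = F(ē_τ, u_{τ+m}) for τ = 0, …, N−m−1. Then ‖ē_{N−m}‖_P ≤ ε_r. -/
/-!
Run the actual trajectory for `m` steps and then continue it by the candidate trajectory: the
concatenation is a perturbed trajectory of the nominal dynamics `e ↦ e + g(e, u_k)`, with
disturbance at most `η` at every one of the `N` steps (and none after step `m`). Since this map is
`(1 + L)`-Lipschitz, a discrete Grönwall argument bounds its deviation from the nominal optimal
trajectory at step `N` by `η ∑_{i<N} (1 + L)^i = η ((1 + L)^N - 1) / L`. Writing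
`‖x‖_P = ‖√P x‖ ≤ ‖√P ẽ_N‖ + λ ‖x - ẽ_N‖`, the choice of `η` makes this at most `ε + (ε_r - ε)`.
-/

open Matrix Finset
open scoped ComplexOrder

section Spectral

variable {𝕜 ι : Type*} [RCLike 𝕜] [Fintype ι] [DecidableEq ι]

theorem Matrix.IsHermitian.eigenvectorBasis_repr_toEuclideanLin {A : Matrix ι ι 𝕜}
    (hA : A.IsHermitian) (x : EuclideanSpace 𝕜 ι) (i : ι) :
    hA.eigenvectorBasis.repr (toEuclideanLin A x) i =
      hA.eigenvalues i * hA.eigenvectorBasis.repr x i := by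
  simp only [IsHermitian.eigenvectorBasis, IsHermitian.eigenvalues, IsHermitian.eigenvalues₀,
    OrthonormalBasis.repr_reindex]
  exact LinearMap.IsSymmetric.eigenvectorBasis_apply_self_apply _ _ _ _

theorem Matrix.PosSemidef.norm_toEuclideanLin_le {A : Matrix ι ι 𝕜} (hA : A.PosSemidef)
    (x : EuclideanSpace 𝕜 ι) :
    ‖toEuclideanLin A x‖ ≤ (⨆ i, hA.1.eigenvalues i) * ‖x‖ := by
  have hev : ∀ i, 0 ≤ hA.1.eigenvalues i := hA.eigenvalues_nonneg
  have hle : ∀ i, hA.1.eigenvalues i ≤ ⨆ i, hA.1.eigenvalues i :=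
    le_ciSup (Set.finite_range _).bddAbove
  have hsup : 0 ≤ ⨆ i, hA.1.eigenvalues i := Real.iSup_nonneg hev
  set b := hA.1.eigenvectorBasis
  rw [← b.repr.norm_map, ← b.repr.norm_map x, EuclideanSpace.norm_eq, EuclideanSpace.norm_eq,
    ← Real.sqrt_sq hsup, ← Real.sqrt_mul (sq_nonneg _), mul_sum]
  gcongr with i
  rw [hA.1.eigenvectorBasis_repr_toEuclideanLin, norm_mul, mul_pow, RCLike.norm_ofReal,
    abs_of_nonneg (hev i)]
  exact mul_le_mul_of_nonneg_right (pow_le_pow_left₀ (hev i) (hle i) 2) (sq_nonneg _)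

end Spectral

theorem Matrix.IsHermitian.sqrt_dotProduct_mulVec_eq_norm {ι : Type*} [Fintype ι] [DecidableEq ι]
    {S P : Matrix ι ι ℝ} (hS : S.IsHermitian) (hsq : S * S = P) (x : EuclideanSpace ℝ ι) :
    Real.sqrt (x ⬝ᵥ P *ᵥ x) = ‖toEuclideanLin S x‖ := by
  rw [← Real.sqrt_sq (norm_nonneg _), ← real_inner_self_eq_norm_sq,
    isSymmetric_toEuclideanLin_iff.mpr hS]
  simp [EuclideanSpace.inner_eq_star_dotProduct, dotProduct_comm, ← hsq, mulVec_mulVec]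

theorem le_mul_geom_sum_of_le_mul_add {R : Type*} [CommSemiring R] [PartialOrder R]
    [IsOrderedRing R] {a : ℕ → R} {b c : R} {K : ℕ} (hc : 0 ≤ c) (h0 : a 0 ≤ 0)
    (hstep : ∀ k < K, a (k + 1) ≤ c * a k + b) : a K ≤ b * ∑ i ∈ range K, c ^ i := by
  induction K with
  | zero => simpa using h0
  | succ K ih =>
    have hK := ih fun k hk => hstep k (hk.trans K.lt_succ_self)
    calc a (K + 1) ≤ c * a K + b := hstep K K.lt_succ_self
      _ ≤ c * (b * ∑ i ∈ range K, c ^ i) + b := by gcongr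
      _ = b * ∑ i ∈ range (K + 1), c ^ i := by rw [geom_sum_succ]; ring

def trajConcat {E : Type*} (e e' : ℕ → E) (m : ℕ) (k : ℕ) : E :=
  if k ≤ m then e k else e' (k - m)

theorem trajConcat_of_le {E : Type*} {e e' : ℕ → E} {m k : ℕ} (h : e' 0 = e m) (hk : m ≤ k) :
    trajConcat e e' m k = e' (k - m) := by
  unfold trajConcat
  split_ifs with hkm
  · rw [le_antisymm hkm hk, Nat.sub_self, h]
  · rfl

section Trajectories

variable {E : Type*} [SeminormedAddCommGroup E]

theorem norm_add_sub_add_le {f : E → E} {L : ℝ} (hf : ∀ x y, ‖f x - f y‖ ≤ L * ‖x - y‖)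
    (x y : E) : ‖x + f x - (y + f y)‖ ≤ (1 + L) * ‖x - y‖ :=
  calc ‖x + f x - (y + f y)‖ = ‖(x - y) + (f x - f y)‖ := by abel_nf
    _ ≤ ‖x - y‖ + L * ‖x - y‖ := (norm_add_le _ _).trans (add_le_add_right (hf x y) _)
    _ = (1 + L) * ‖x - y‖ := by ring

theorem norm_sub_le_mul_geom_sum_of_perturbed {Φ : ℕ → E → E} {C η : ℝ} (hC : 0 ≤ C)
    (hΦ : ∀ k x y, ‖Φ k x - Φ k y‖ ≤ C * ‖x - y‖) {x y : ℕ → E} {K : ℕ} (h0 : x 0 = y 0)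
    (hx : ∀ k < K, ‖x (k + 1) - Φ k (x k)‖ ≤ η) (hy : ∀ k < K, y (k + 1) = Φ k (y k)) :
    ‖x K - y K‖ ≤ η * ∑ i ∈ range K, C ^ i := by
  refine le_mul_geom_sum_of_le_mul_add (a := fun k ↦ ‖x k - y k‖) hC (by simp [h0])
    fun k hk ↦ ?_
  calc ‖x (k + 1) - y (k + 1)‖ = ‖(x (k + 1) - Φ k (x k)) + (Φ k (x k) - Φ k (y k))‖ := by
        rw [hy k hk]; abel_nf
    _ ≤ η + C * ‖x k - y k‖ := (norm_add_le _ _).trans (add_le_add (hx k hk) (hΦ k _ _))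
    _ = C * ‖x k - y k‖ + η := add_comm _ _

theorem norm_trajConcat_succ_sub_le {Φ : ℕ → E → E} {e e' : ℕ → E} {m N : ℕ} {η : ℝ}
    (hη : 0 ≤ η) (he : ∀ k < m, ‖e (k + 1) - Φ k (e k)‖ ≤ η) (h0 : e' 0 = e m)
    (he' : ∀ τ < N - m, e' (τ + 1) = Φ (τ + m) (e' τ)) :
    ∀ k < N, ‖trajConcat e e' m (k + 1) - Φ k (trajConcat e e' m k)‖ ≤ η := by
  intro k hk
  rcases lt_or_ge k m with hkm | hmk
  · simpa [trajConcat, hkm.le, Nat.succ_le_of_lt hkm] using he k hkm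
  · rw [trajConcat_of_le h0 hmk, trajConcat_of_le h0 (hmk.trans k.le_succ),
      show k + 1 - m = k - m + 1 by omega, he' (k - m) (by omega), Nat.sub_add_cancel hmk,
      sub_self, norm_zero]
    exact hη

end Trajectories

theorem stmt_10_general (n p : ℕ) (L : ℝ) (hL : 0 < L)
    (g : EuclideanSpace ℝ (Fin n) → EuclideanSpace ℝ (Fin p) → EuclideanSpace ℝ (Fin n))
    (hg : ∀ x y : EuclideanSpace ℝ (Fin n), ∀ u : EuclideanSpace ℝ (Fin p),
      ‖g x u - g y u‖ ≤ L * ‖x - y‖)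
    (P sqrtP : Matrix (Fin n) (Fin n) ℝ)
    (hsqrtP : sqrtP.PosDef) (hsq : sqrtP * sqrtP = P)
    (lam : ℝ) (hlam : lam = ⨆ i, hsqrtP.1.eigenvalues i)
    (ε εr : ℝ) (hεεr : ε < εr)
    (N m : ℕ) (hmN : m ≤ N)
    (η : ℝ) (hη0 : 0 ≤ η) (hη : η ≤ L * (εr - ε) / (lam * ((1 + L) ^ N - 1)))
    (u : ℕ → EuclideanSpace ℝ (Fin p))
    (etil e ebar : ℕ → EuclideanSpace ℝ (Fin n))
    (d : ℕ → EuclideanSpace ℝ (Fin n))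
    (hetil : ∀ τ < N, etil (τ + 1) = etil τ + g (etil τ) (u τ))
    (hterm : Real.sqrt (etil N ⬝ᵥ P.mulVec (etil N)) ≤ ε)
    (he0 : e 0 = etil 0)
    (he : ∀ k < m, e (k + 1) = e k + g (e k) (u k) + d k)
    (hd : ∀ k < m, ‖d k‖ ≤ η)
    (hebar0 : ebar 0 = e m)
    (hebar : ∀ τ < N - m, ebar (τ + 1) = ebar τ + g (ebar τ) (u (τ + m))) :
    Real.sqrt (ebar (N - m) ⬝ᵥ P.mulVec (ebar (N - m))) ≤ εr := by
  set S := ∑ i ∈ range N, (1 + L) ^ i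
  have hdev : ‖ebar (N - m) - etil N‖ ≤ η * S := by
    let Φ k x := x + g x (u k)
    have hstep : ∀ k < m, ‖e (k + 1) - Φ k (e k)‖ ≤ η := fun k hk ↦ by
      rw [he k hk, add_sub_cancel_left]; exact hd k hk
    rw [← trajConcat_of_le hebar0 hmN]
    exact norm_sub_le_mul_geom_sum_of_perturbed (Φ := Φ) (by linarith)
      (fun k ↦ norm_add_sub_add_le (hg · · (u k))) (by simp [trajConcat, he0])
      (norm_trajConcat_succ_sub_le hη0 hstep hebar0 hebar) hetil
  have hlam0 : 0 ≤ lam := by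
    rw [hlam]; exact Real.iSup_nonneg hsqrtP.posSemidef.eigenvalues_nonneg
  have hbudget : η * (lam * S) ≤ εr - ε := by
    have hgeom : (1 + L) ^ N - 1 = L * S := by rw [← geom_sum_mul]; ring
    rw [hgeom, mul_left_comm, mul_div_mul_left _ _ hL.ne'] at hη
    exact mul_le_of_le_div₀ (by linarith)
      (mul_nonneg hlam0 (sum_nonneg fun i _ ↦ by positivity)) hη
  rw [hsqrtP.1.sqrt_dotProduct_mulVec_eq_norm hsq] at hterm ⊢
  calc ‖toEuclideanLin sqrtP (ebar (N - m))‖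
      ≤ ‖toEuclideanLin sqrtP (etil N)‖ + ‖toEuclideanLin sqrtP (ebar (N - m) - etil N)‖ := by
        rw [map_sub]; exact norm_le_norm_add_norm_sub' _ _
    _ ≤ ε + lam * ‖ebar (N - m) - etil N‖ := by
        rw [hlam]; exact add_le_add hterm (hsqrtP.posSemidef.norm_toEuclideanLin_le _)
    _ ≤ ε + (εr - ε) := by
        gcongr; linarith [mul_le_mul_of_nonneg_left hdev hlam0]
    _ = εr := by ring

/-- first half of Lemma 1: after `m` disturbed steps under the
previously optimal inputs, the shifted candidate trajectory reaches the
enlarged terminal region `{e : ‖e‖_P ≤ ε_r}` at prediction step `N − m`. -/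
theorem stmt_10 (n p : ℕ) (hn : 1 ≤ n) (L : ℝ) (hL : 0 < L)
    (g : EuclideanSpace ℝ (Fin n) → EuclideanSpace ℝ (Fin p) → EuclideanSpace ℝ (Fin n))
    (hg : ∀ x y : EuclideanSpace ℝ (Fin n), ∀ u : EuclideanSpace ℝ (Fin p),
      ‖g x u - g y u‖ ≤ L * ‖x - y‖)
    (P sqrtP : Matrix (Fin n) (Fin n) ℝ) (hP : P.PosDef)
    (hsqrtP : sqrtP.PosDef) (hsq : sqrtP * sqrtP = P)
    (lam : ℝ) (hlam : lam = ⨆ i, hsqrtP.1.eigenvalues i)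
    (ε εr : ℝ) (hε : 0 < ε) (hεεr : ε < εr)
    (N m : ℕ) (hm1 : 1 ≤ m) (hmN : m ≤ N)
    (η : ℝ) (hη0 : 0 ≤ η) (hη : η ≤ L * (εr - ε) / (lam * ((1 + L) ^ N - 1)))
    (u : ℕ → EuclideanSpace ℝ (Fin p))
    (etil e ebar : ℕ → EuclideanSpace ℝ (Fin n))
    (d : ℕ → EuclideanSpace ℝ (Fin n))
    (hetil : ∀ τ < N, etil (τ + 1) = etil τ + g (etil τ) (u τ))
    (hterm : Real.sqrt (etil N ⬝ᵥ P.mulVec (etil N)) ≤ ε)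
    (he0 : e 0 = etil 0)
    (he : ∀ k < m, e (k + 1) = e k + g (e k) (u k) + d k)
    (hd : ∀ k < m, ‖d k‖ ≤ η)
    (hebar0 : ebar 0 = e m)
    (hebar : ∀ τ < N - m, ebar (τ + 1) = ebar τ + g (ebar τ) (u (τ + m))) :
    Real.sqrt (ebar (N - m) ⬝ᵥ P.mulVec (ebar (N - m))) ≤ εr :=
  stmt_10_general n p L hL g hg P sqrtP hsqrtP hsq lam hlam ε εr hεεr N m hmN η hη0 hη u etil e ebar
    d hetil hterm he0 he hd hebar0 hebar
end

section
/- Let n, p ∈ ℕ with n ≥ 1, let L > 0, and let g : ℝⁿ × ℝᵖ → ℝⁿ satisfy ‖g(x,u) − g(y,u)‖ ≤ L‖x − y‖ for all x, y, u; define F(e,u) = e + g(e,u). Let P and Q* be real symmetric positive-definite n×n matrices with ‖x‖_P = √(xᵀPx), let λ denote the largest eigenvalue of the positive-definite square root √P, let λ_min(Q*) be the smallest eigenvalue of Q* and λ_max(P) the largest eigenvalue of P, and assume λ_min(Q*) ≤ λ_max(P). Let κ : ℝⁿ → ℝᵖ be a feedback such that for every e with ‖e‖_P ≤ ε_r, ‖F(e,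 κ(e))‖²_P ≤ ‖e‖²_P − eᵀQ*e. Let 0 < ε < ε_r, N, m ∈ ℕ with 1 ≤ m ≤ N, and η ≥ 0 with η ≤ L(ε_r − ε)/(λ·((1+L)^N − 1)). Assume further Υ(m) ≤ 0, where Υ(m) = (1 − λ_min(Q*)/λ_max(P))^m · [ε + (η λ / L)·((1+L)^N − (1+L)^{N−m})]² − ε². Let (u_τ)_{τ=0}^{N−1} be inputs, let (ẽ_τ)_{τ=0}^{N} satisfy ẽ_{τ+1} = F(ẽ_τ, u_τ) with ‖ẽ_N‖_P ≤ ε, let e_0 = ẽ_0 and e_{k+1} = F(e_k, u_k) + d_k with ‖d_k‖ ≤ η for k = 0, …, m−1, and define the candidate trajectory ē_0 = e_m, ē_{τ+1} = F(ē_τ, u_{τ+m}) for 0 ≤ τ ≤ N−m−1, and ē_{τ+1} = F(ē_τ, κ(ē_τ)) for N−m ≤ τ ≤ N−1. Then ‖ē_N‖²_P ≤ ε². -/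
/-!
Along the first `m` steps the disturbed trajectory drifts from the nominal one by at most
`η((1+L)^k - 1)/L` (discrete Gronwall), and following the shifted inputs for another `N - m` steps
amplifies this gap by `(1+L)^(N-m)`. Since the nominal trajectory ends in the `P`-ball of radius `ε`,
the candidate enters the `κ`-phase in the `P`-ball of radius `ρ = ε + λη((1+L)^N - (1+L)^(N-m))/L`,
and the bound on `η` gives `ρ ≤ ε_r`. Inside that ball the terminal decrease condition together with
`λ_min(Q*)‖x‖² ≤ xᵀQ*x` and `xᵀPx ≤ λ_max(P)‖x‖²` contracts `‖·‖²_P` by the factor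
`1 - λ_min(Q*)/λ_max(P)` at each of the last `m` steps, so `‖ē_N‖²_P ≤ Υ(m) + ε² ≤ ε²`.
-/

open Finset

lemma le_pow_mul_add_mul_geom_sum {a : ℕ → ℝ} {c b : ℝ} {K : ℕ} (hc : 0 ≤ c)
    (h : ∀ k < K, a (k + 1) ≤ c * a k + b) :
    ∀ k ≤ K, a k ≤ c ^ k * a 0 + b * ∑ i ∈ range k, c ^ i := by
  intro k hk
  induction k with
  | zero => simp
  | succ k ih =>
    calc a (k + 1) ≤ c * a k + b := h k hk
      _ ≤ c * (c ^ k * a 0 + b * ∑ i ∈ range k, c ^ i) + b := by gcongr; exact ih (by omega)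
      _ = c ^ (k + 1) * a 0 + b * ∑ i ∈ range (k + 1), c ^ i := by rw [geom_sum_succ]; ring

lemma le_pow_mul_of_le_mul {q : ℕ → ℝ} {c R : ℝ} {K : ℕ} (hc0 : 0 ≤ c) (hc1 : c ≤ 1)
    (hq0 : 0 ≤ q 0) (hR : q 0 ≤ R) (h : ∀ j < K, q j ≤ R → q (j + 1) ≤ c * q j) :
    ∀ j ≤ K, q j ≤ c ^ j * q 0 := by
  intro j hj
  induction j with
  | zero => simp
  | succ j ih =>
    have hqj := ih (by omega)
    have hqjR : q j ≤ R :=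
      hqj.trans ((mul_le_of_le_one_left hq0 (pow_le_one₀ hc0 hc1)).trans hR)
    calc q (j + 1) ≤ c * q j := h j hj hqjR
      _ ≤ c * (c ^ j * q 0) := by gcongr
      _ = c ^ (j + 1) * q 0 := by ring

lemma norm_add_add_sub_add_le {E : Type*} [SeminormedAddCommGroup E] {L : ℝ} {x y gx gy : E}
    (d : E) (hg : ‖gx - gy‖ ≤ L * ‖x - y‖) :
    ‖x + gx + d - (y + gy)‖ ≤ (1 + L) * ‖x - y‖ + ‖d‖ := by
  calc ‖x + gx + d - (y + gy)‖ = ‖(x - y) + (gx - gy) + d‖ := by congr 1; abel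
    _ ≤ ‖x - y‖ + ‖gx - gy‖ + ‖d‖ := norm_add₃_le
    _ ≤ (1 + L) * ‖x - y‖ + ‖d‖ := by linarith

lemma norm_sub_le_of_perturbed {E U : Type*} [SeminormedAddCommGroup E] {g : E → U → E}
    {L η : ℝ} (hL : 0 ≤ L) (hg : ∀ x y u, ‖g x u - g y u‖ ≤ L * ‖x - y‖)
    {u : ℕ → U} {d x y : ℕ → E} {K : ℕ}
    (hx : ∀ k < K, x (k + 1) = x k + g (x k) (u k) + d k)
    (hy : ∀ k < K, y (k + 1) = y k + g (y k) (u k)) (hd : ∀ k < K, ‖d k‖ ≤ η) :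
    ∀ k ≤ K, ‖x k - y k‖ ≤ (1 + L) ^ k * ‖x 0 - y 0‖ + η * ∑ i ∈ range k, (1 + L) ^ i :=
  le_pow_mul_add_mul_geom_sum (by linarith) fun k hk => by
    rw [hx k hk, hy k hk]
    exact (norm_add_add_sub_add_le (d k) (hg _ _ _)).trans (by gcongr; exact hd k hk)

lemma norm_sub_le_of_switch {E U : Type*} [SeminormedAddCommGroup E] {g : E → U → E}
    {L η : ℝ} (hL : 0 < L) (hg : ∀ x y u, ‖g x u - g y u‖ ≤ L * ‖x - y‖) {N m : ℕ}
    (hmN : m ≤ N) {u : ℕ → U} {etil e ebar d : ℕ → E}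
    (hetil : ∀ τ < N, etil (τ + 1) = etil τ + g (etil τ) (u τ))
    (he0 : e 0 = etil 0) (he : ∀ k < m, e (k + 1) = e k + g (e k) (u k) + d k)
    (hd : ∀ k < m, ‖d k‖ ≤ η) (hebar0 : ebar 0 = e m)
    (hebar : ∀ τ < N - m, ebar (τ + 1) = ebar τ + g (ebar τ) (u (τ + m))) :
    ‖ebar (N - m) - etil N‖ ≤ η / L * ((1 + L) ^ N - (1 + L) ^ (N - m)) := by
  have hdisturbed := norm_sub_le_of_perturbed hL.le hg he
    (fun k hk => hetil k (hk.trans_le hmN)) hd m le_rfl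
  have hshifted := norm_sub_le_of_perturbed hL.le hg (u := fun τ => u (τ + m)) (d := 0) (x := ebar)
    (y := fun τ => etil (τ + m)) (η := 0)
    (fun τ hτ => by rw [hebar τ hτ, Pi.zero_apply, add_zero])
    (fun τ hτ => by rw [Nat.add_right_comm]; exact hetil _ (by omega))
    (fun _ _ => by simp) (N - m) le_rfl
  rw [he0, sub_self, norm_zero, mul_zero, zero_add] at hdisturbed
  rw [zero_mul, add_zero, zero_add, Nat.sub_add_cancel hmN, hebar0] at hshifted
  have hpow : (1 + L) ^ N = (1 + L) ^ (N - m) * (1 + L) ^ m := by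
    rw [← pow_add, Nat.sub_add_cancel hmN]
  calc ‖ebar (N - m) - etil N‖ ≤ (1 + L) ^ (N - m) * ‖e m - etil m‖ := hshifted
    _ ≤ (1 + L) ^ (N - m) * (η * ∑ i ∈ range m, (1 + L) ^ i) := by gcongr
    _ = η / L * ((1 + L) ^ N - (1 + L) ^ (N - m)) := by
      rw [geom_sum_eq (by linarith), add_sub_cancel_left, hpow]
      field_simp

lemma add_div_mul_pow_sub_pow_le {L η lam ε εr : ℝ} {N k : ℕ} (hL : 0 < L) (hkN : k ≤ N)
    (hη0 : 0 ≤ η) (hlam : 0 ≤ lam) (hεεr : ε < εr)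
    (hη : η ≤ L * (εr - ε) / (lam * ((1 + L) ^ N - 1))) :
    ε + η * lam / L * ((1 + L) ^ N - (1 + L) ^ k) ≤ εr := by
  have hpow : 1 ≤ (1 + L) ^ k := one_le_pow₀ (by linarith)
  have hpowN : (1 + L) ^ k ≤ (1 + L) ^ N := pow_le_pow_right₀ (by linarith) hkN
  have hηD : η * (lam * ((1 + L) ^ N - 1)) ≤ L * (εr - ε) :=
    mul_le_of_le_div₀ (by nlinarith) (mul_nonneg hlam (by linarith)) hη
  have : η * lam / L * ((1 + L) ^ N - (1 + L) ^ k) ≤ εr - ε := by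
    rw [div_mul_eq_mul_div, div_le_iff₀ hL]
    nlinarith [mul_nonneg hη0 hlam]
  linarith

namespace Matrix.IsHermitian

variable {ι : Type*} [Fintype ι]

lemma dotProduct_mulVec_eq_norm_sq {S P : Matrix ι ι ℝ} (hS : S.IsHermitian)
    (hSS : S * S = P) (x : EuclideanSpace ℝ ι) :
    x ⬝ᵥ P *ᵥ x = ‖WithLp.toLp 2 (S *ᵥ x)‖ ^ 2 := by
  have hvec : x.ofLp ᵥ* S = S *ᵥ x := by
    rw [← vecMul_transpose, ← conjTranspose_eq_transpose_of_trivial, hS]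
  rw [← hSS, ← mulVec_mulVec, dotProduct_mulVec, hvec, EuclideanSpace.real_norm_sq_eq]
  simp only [dotProduct, sq]

lemma sqrt_dotProduct_mulVec_eq_norm_s11 {S P : Matrix ι ι ℝ}
    (hS : S.IsHermitian) (hSS : S * S = P) (x : EuclideanSpace ℝ ι) :
    √(x ⬝ᵥ P *ᵥ x) = ‖WithLp.toLp 2 (S *ᵥ x)‖ := by
  rw [hS.dotProduct_mulVec_eq_norm_sq hSS, Real.sqrt_sq (norm_nonneg _)]

variable [DecidableEq ι] {A : Matrix ι ι ℝ}

lemma eigenvectorBasis_repr_mulVec (hA : A.IsHermitian) (x : EuclideanSpace ℝ ι) (j : ι) :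
    hA.eigenvectorBasis.repr (WithLp.toLp 2 (A *ᵥ x)) j =
      hA.eigenvalues j * hA.eigenvectorBasis.repr x j := by
  have hsymm := Matrix.isSymmetric_toEuclideanLin_iff.mpr hA
  have heig : toEuclideanLin A (hA.eigenvectorBasis j) =
      hA.eigenvalues j • hA.eigenvectorBasis j := by
    ext1; simp [toLpLin_apply, hA.mulVec_eigenvectorBasis]
  simp only [OrthonormalBasis.repr_apply_apply]
  rw [← toLpLin_apply, ← hsymm, heig, real_inner_smul_left]

lemma norm_sq_eq_sum_eigenvectorBasis_repr (hA : A.IsHermitian) (x : EuclideanSpace ℝ ι) :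
    ‖x‖ ^ 2 = ∑ j, hA.eigenvectorBasis.repr x j ^ 2 := by
  rw [← hA.eigenvectorBasis.repr.norm_map, EuclideanSpace.real_norm_sq_eq]

lemma dotProduct_mulVec_eq_sum (hA : A.IsHermitian) (x : EuclideanSpace ℝ ι) :
    x ⬝ᵥ A *ᵥ x = ∑ j, hA.eigenvalues j * hA.eigenvectorBasis.repr x j ^ 2 := by
  have : x ⬝ᵥ A *ᵥ x = inner ℝ x (WithLp.toLp 2 (A *ᵥ x)) := by
    simp [EuclideanSpace.inner_eq_star_dotProduct, dotProduct_comm]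
  rw [this, ← hA.eigenvectorBasis.repr.inner_map_map, EuclideanSpace.inner_eq_star_dotProduct]
  simp only [eigenvectorBasis_repr_mulVec, dotProduct, star_trivial]
  exact sum_congr rfl fun j _ => by ring

lemma norm_mulVec_sq_eq_sum (hA : A.IsHermitian) (x : EuclideanSpace ℝ ι) :
    ‖WithLp.toLp 2 (A *ᵥ x)‖ ^ 2 =
      ∑ j, hA.eigenvalues j ^ 2 * hA.eigenvectorBasis.repr x j ^ 2 := by
  simp only [hA.norm_sq_eq_sum_eigenvectorBasis_repr, eigenvectorBasis_repr_mulVec, mul_pow]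

lemma dotProduct_mulVec_le (hA : A.IsHermitian) (x : EuclideanSpace ℝ ι) :
    x ⬝ᵥ A *ᵥ x ≤ (⨆ i, hA.eigenvalues i) * ‖x‖ ^ 2 := by
  rw [hA.dotProduct_mulVec_eq_sum, hA.norm_sq_eq_sum_eigenvectorBasis_repr, mul_sum]
  gcongr with j
  exact le_ciSup (Set.finite_range _).bddAbove j

lemma iInf_mul_le_dotProduct_mulVec (hA : A.IsHermitian) (x : EuclideanSpace ℝ ι) :
    (⨅ i, hA.eigenvalues i) * ‖x‖ ^ 2 ≤ x ⬝ᵥ A *ᵥ x := by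
  rw [hA.dotProduct_mulVec_eq_sum, hA.norm_sq_eq_sum_eigenvectorBasis_repr, mul_sum]
  gcongr with j
  exact ciInf_le (Set.finite_range _).bddBelow j

lemma dotProduct_mulVec_nonneg (hA : A.IsHermitian) (hA0 : ∀ i, 0 ≤ hA.eigenvalues i)
    (x : EuclideanSpace ℝ ι) : 0 ≤ x ⬝ᵥ A *ᵥ x :=
  (mul_nonneg (Real.iInf_nonneg hA0) (sq_nonneg ‖x‖)).trans (hA.iInf_mul_le_dotProduct_mulVec x)

lemma norm_mulVec_le (hA : A.IsHermitian) (hA0 : ∀ i, 0 ≤ hA.eigenvalues i)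
    (x : EuclideanSpace ℝ ι) :
    ‖WithLp.toLp 2 (A *ᵥ x)‖ ≤ (⨆ i, hA.eigenvalues i) * ‖x‖ := by
  refine le_of_sq_le_sq ?_ (mul_nonneg (Real.iSup_nonneg hA0) (norm_nonneg x))
  rw [mul_pow, hA.norm_mulVec_sq_eq_sum, hA.norm_sq_eq_sum_eigenvectorBasis_repr, mul_sum]
  gcongr with j
  exacts [hA0 j, le_ciSup (Set.finite_range _).bddAbove j]

lemma dotProduct_mulVec_sub_le_mul {P Q : Matrix ι ι ℝ}
    (hP : P.IsHermitian) (hP0 : ∀ i, 0 ≤ hP.eigenvalues i)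
    (hQ : Q.IsHermitian) (hQ0 : ∀ i, 0 ≤ hQ.eigenvalues i) (x : EuclideanSpace ℝ ι) :
    x ⬝ᵥ P *ᵥ x - x ⬝ᵥ Q *ᵥ x ≤
      (1 - (⨅ i, hQ.eigenvalues i) / ⨆ i, hP.eigenvalues i) * (x ⬝ᵥ P *ᵥ x) := by
  set a := ⨅ i, hQ.eigenvalues i
  set b := ⨆ i, hP.eigenvalues i
  have hPx : x ⬝ᵥ P *ᵥ x ≤ b * ‖x‖ ^ 2 := hP.dotProduct_mulVec_le x
  have hQx : a * ‖x‖ ^ 2 ≤ x ⬝ᵥ Q *ᵥ x := hQ.iInf_mul_le_dotProduct_mulVec x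
  have ha : 0 ≤ a := Real.iInf_nonneg hQ0
  have hb : 0 ≤ b := Real.iSup_nonneg hP0
  clear_value a b
  suffices a / b * (x ⬝ᵥ P *ᵥ x) ≤ x ⬝ᵥ Q *ᵥ x by linarith
  rcases hb.eq_or_lt with rfl | hb
  · rw [div_zero, zero_mul]
    exact (by positivity : 0 ≤ a * ‖x‖ ^ 2).trans hQx
  · calc a / b * (x ⬝ᵥ P *ᵥ x) ≤ a / b * (b * ‖x‖ ^ 2) := by gcongr
      _ = a * ‖x‖ ^ 2 := by field_simp
      _ ≤ x ⬝ᵥ Q *ᵥ x := hQx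

lemma sqrt_dotProduct_mulVec_le_add {S P : Matrix ι ι ℝ}
    (hS : S.IsHermitian) (hS0 : ∀ i, 0 ≤ hS.eigenvalues i) (hSS : S * S = P)
    (x y : EuclideanSpace ℝ ι) :
    √(y ⬝ᵥ P *ᵥ y) ≤ √(x ⬝ᵥ P *ᵥ x) + (⨆ i, hS.eigenvalues i) * ‖y - x‖ := by
  simp only [hS.sqrt_dotProduct_mulVec_eq_norm_s11 hSS]
  calc ‖WithLp.toLp 2 (S *ᵥ y)‖
      = ‖WithLp.toLp 2 (S *ᵥ x) + WithLp.toLp 2 (S *ᵥ (y - x))‖ := by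
        rw [← WithLp.toLp_add, ← mulVec_add, add_sub_cancel]
    _ ≤ ‖WithLp.toLp 2 (S *ᵥ x)‖ + ‖WithLp.toLp 2 (S *ᵥ (y - x))‖ := norm_add_le _ _
    _ ≤ ‖WithLp.toLp 2 (S *ᵥ x)‖ + (⨆ i, hS.eigenvalues i) * ‖y - x‖ := by
        gcongr
        exact hS.norm_mulVec_le hS0 (y - x)

lemma dotProduct_mulVec_le_pow_mul_of_decrease {P Q : Matrix ι ι ℝ} (hP : P.IsHermitian)
    (hP0 : ∀ i, 0 ≤ hP.eigenvalues i) (hQ : Q.IsHermitian) (hQ0 : ∀ i, 0 ≤ hQ.eigenvalues i)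
    (hQP : (⨅ i, hQ.eigenvalues i) ≤ ⨆ i, hP.eigenvalues i)
    {f : EuclideanSpace ℝ ι → EuclideanSpace ℝ ι} {ρ r : ℝ}
    (hf : ∀ v : EuclideanSpace ℝ ι, √(v ⬝ᵥ P *ᵥ v) ≤ r →
      f v ⬝ᵥ P *ᵥ (f v) ≤ v ⬝ᵥ P *ᵥ v - v ⬝ᵥ Q *ᵥ v)
    {x : ℕ → EuclideanSpace ℝ ι} {K : ℕ} (hx : ∀ j < K, x (j + 1) = f (x j))
    (hx0 : √(x 0 ⬝ᵥ P *ᵥ (x 0)) ≤ ρ) (hρr : ρ ≤ r) :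
    x K ⬝ᵥ P *ᵥ (x K) ≤ (1 - (⨅ i, hQ.eigenvalues i) / ⨆ i, hP.eigenvalues i) ^ K * ρ ^ 2 := by
  have hρ : 0 ≤ ρ := (Real.sqrt_nonneg _).trans hx0
  have hr : 0 ≤ r := hρ.trans hρr
  set c := 1 - (⨅ i, hQ.eigenvalues i) / ⨆ i, hP.eigenvalues i
  have hc0 : 0 ≤ c := sub_nonneg.mpr (div_le_one_of_le₀ hQP (Real.iSup_nonneg hP0))
  have hc1 : c ≤ 1 := sub_le_self _ (div_nonneg (Real.iInf_nonneg hQ0) (Real.iSup_nonneg hP0))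
  have hq0 : x 0 ⬝ᵥ P *ᵥ (x 0) ≤ ρ ^ 2 := (Real.sqrt_le_left hρ).mp hx0
  have hdecay := le_pow_mul_of_le_mul (q := fun j => x j ⬝ᵥ P *ᵥ (x j)) (R := r ^ 2)
    hc0 hc1 (hP.dotProduct_mulVec_nonneg hP0 _)
    (hq0.trans (pow_le_pow_left₀ hρ hρr 2))
    (fun j hj hqj => by
      rw [hx j hj]
      exact (hf _ ((Real.sqrt_le_left hr).mpr hqj)).trans
        (hP.dotProduct_mulVec_sub_le_mul hP0 hQ hQ0 _)) K le_rfl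
  exact hdecay.trans (mul_le_mul_of_nonneg_left hq0 (pow_nonneg hc0 K))

end Matrix.IsHermitian

theorem stmt_11_general (n p : ℕ) (L : ℝ) (hL : 0 < L)
    (g : EuclideanSpace ℝ (Fin n) → EuclideanSpace ℝ (Fin p) → EuclideanSpace ℝ (Fin n))
    (hg : ∀ x y : EuclideanSpace ℝ (Fin n), ∀ u : EuclideanSpace ℝ (Fin p),
      ‖g x u - g y u‖ ≤ L * ‖x - y‖)
    (P Qstar sqrtP : Matrix (Fin n) (Fin n) ℝ) (hP : P.PosDef) (hQstar : Qstar.PosDef)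
    (hsqrtP : sqrtP.PosDef) (hsq : sqrtP * sqrtP = P)
    (lam lamMinQ lamMaxP : ℝ)
    (hlam : lam = ⨆ i, hsqrtP.1.eigenvalues i)
    (hlamMinQ : lamMinQ = ⨅ i, hQstar.1.eigenvalues i)
    (hlamMaxP : lamMaxP = ⨆ i, hP.1.eigenvalues i)
    (hQP : lamMinQ ≤ lamMaxP)
    (κ : EuclideanSpace ℝ (Fin n) → EuclideanSpace ℝ (Fin p))
    (ε εr : ℝ) (hεεr : ε < εr)
    (hκ : ∀ e : EuclideanSpace ℝ (Fin n), Real.sqrt (e ⬝ᵥ P.mulVec e) ≤ εr →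
      (e + g e (κ e)) ⬝ᵥ P.mulVec (e + g e (κ e)) ≤
        e ⬝ᵥ P.mulVec e - e ⬝ᵥ Qstar.mulVec e)
    (N m : ℕ) (hmN : m ≤ N)
    (η : ℝ) (hη0 : 0 ≤ η) (hη : η ≤ L * (εr - ε) / (lam * ((1 + L) ^ N - 1)))
    (hΥ : (1 - lamMinQ / lamMaxP) ^ m *
        (ε + η * lam / L * ((1 + L) ^ N - (1 + L) ^ (N - m))) ^ 2 - ε ^ 2 ≤ 0)
    (u : ℕ → EuclideanSpace ℝ (Fin p))
    (etil e ebar : ℕ → EuclideanSpace ℝ (Fin n))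
    (d : ℕ → EuclideanSpace ℝ (Fin n))
    (hetil : ∀ τ < N, etil (τ + 1) = etil τ + g (etil τ) (u τ))
    (hterm : Real.sqrt (etil N ⬝ᵥ P.mulVec (etil N)) ≤ ε)
    (he0 : e 0 = etil 0)
    (he : ∀ k < m, e (k + 1) = e k + g (e k) (u k) + d k)
    (hd : ∀ k < m, ‖d k‖ ≤ η)
    (hebar0 : ebar 0 = e m)
    (hebar₁ : ∀ τ < N - m, ebar (τ + 1) = ebar τ + g (ebar τ) (u (τ + m)))
    (hebar₂ : ∀ τ, N - m ≤ τ → τ < N →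
      ebar (τ + 1) = ebar τ + g (ebar τ) (κ (ebar τ))) :
    ebar N ⬝ᵥ P.mulVec (ebar N) ≤ ε ^ 2 := by
  have hlam0 : 0 ≤ lam := hlam ▸ Real.iSup_nonneg fun i => (hsqrtP.eigenvalues_pos i).le
  set ρ := ε + η * lam / L * ((1 + L) ^ N - (1 + L) ^ (N - m))
  have hρ : √(ebar (N - m) ⬝ᵥ P.mulVec (ebar (N - m))) ≤ ρ := by
    refine (hsqrtP.1.sqrt_dotProduct_mulVec_le_add (fun i => (hsqrtP.eigenvalues_pos i).le)
      hsq (etil N) _).trans ?_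
    rw [← hlam]
    calc _ ≤ ε + lam * (η / L * ((1 + L) ^ N - (1 + L) ^ (N - m))) :=
          add_le_add hterm <| mul_le_mul_of_nonneg_left
            (norm_sub_le_of_switch hL hg hmN hetil he0 he hd hebar0 hebar₁) hlam0
      _ = ρ := by ring
  have hρεr : ρ ≤ εr := add_div_mul_pow_sub_pow_le hL (Nat.sub_le N m) hη0 hlam0 hεεr hη
  have hdecay := hP.1.dotProduct_mulVec_le_pow_mul_of_decrease
    (fun i => (hP.eigenvalues_pos i).le) hQstar.1 (fun i => (hQstar.eigenvalues_pos i).le)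
    (hlamMinQ ▸ hlamMaxP ▸ hQP) (f := fun e => e + g e (κ e)) hκ
    (x := fun j => ebar (N - m + j)) (K := m)
    (fun j hj => by rw [← add_assoc, hebar₂ _ (by omega) (by omega)]) hρ hρεr
  simp only [Nat.sub_add_cancel hmN, ← hlamMinQ, ← hlamMaxP] at hdecay
  linarith

/-- Lemma 1 of the paper: under the admissible disturbance bound
and the condition `Υ(m) ≤ 0`, the candidate trajectory (shift of the previous
optimal control sequence followed by `m` steps of the local feedback `κ`)
satisfies the terminal constraint `‖ē_N‖²_P ≤ ε²`. -/
theorem stmt_11 (n p : ℕ) (hn : 1 ≤ n) (L : ℝ) (hL : 0 < L)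
    (g : EuclideanSpace ℝ (Fin n) → EuclideanSpace ℝ (Fin p) → EuclideanSpace ℝ (Fin n))
    (hg : ∀ x y : EuclideanSpace ℝ (Fin n), ∀ u : EuclideanSpace ℝ (Fin p),
      ‖g x u - g y u‖ ≤ L * ‖x - y‖)
    (P Qstar sqrtP : Matrix (Fin n) (Fin n) ℝ) (hP : P.PosDef) (hQstar : Qstar.PosDef)
    (hsqrtP : sqrtP.PosDef) (hsq : sqrtP * sqrtP = P)
    (lam lamMinQ lamMaxP : ℝ)
    (hlam : lam = ⨆ i, hsqrtP.1.eigenvalues i)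
    (hlamMinQ : lamMinQ = ⨅ i, hQstar.1.eigenvalues i)
    (hlamMaxP : lamMaxP = ⨆ i, hP.1.eigenvalues i)
    (hQP : lamMinQ ≤ lamMaxP)
    (κ : EuclideanSpace ℝ (Fin n) → EuclideanSpace ℝ (Fin p))
    (ε εr : ℝ) (hε : 0 < ε) (hεεr : ε < εr)
    (hκ : ∀ e : EuclideanSpace ℝ (Fin n), Real.sqrt (e ⬝ᵥ P.mulVec e) ≤ εr →
      (e + g e (κ e)) ⬝ᵥ P.mulVec (e + g e (κ e)) ≤
        e ⬝ᵥ P.mulVec e - e ⬝ᵥ Qstar.mulVec e)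
    (N m : ℕ) (hm1 : 1 ≤ m) (hmN : m ≤ N)
    (η : ℝ) (hη0 : 0 ≤ η) (hη : η ≤ L * (εr - ε) / (lam * ((1 + L) ^ N - 1)))
    (hΥ : (1 - lamMinQ / lamMaxP) ^ m *
        (ε + η * lam / L * ((1 + L) ^ N - (1 + L) ^ (N - m))) ^ 2 - ε ^ 2 ≤ 0)
    (u : ℕ → EuclideanSpace ℝ (Fin p))
    (etil e ebar : ℕ → EuclideanSpace ℝ (Fin n))
    (d : ℕ → EuclideanSpace ℝ (Fin n))
    (hetil : ∀ τ < N, etil (τ + 1) = etil τ + g (etil τ) (u τ))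
    (hterm : Real.sqrt (etil N ⬝ᵥ P.mulVec (etil N)) ≤ ε)
    (he0 : e 0 = etil 0)
    (he : ∀ k < m, e (k + 1) = e k + g (e k) (u k) + d k)
    (hd : ∀ k < m, ‖d k‖ ≤ η)
    (hebar0 : ebar 0 = e m)
    (hebar₁ : ∀ τ < N - m, ebar (τ + 1) = ebar τ + g (ebar τ) (u (τ + m)))
    (hebar₂ : ∀ τ, N - m ≤ τ → τ < N →
      ebar (τ + 1) = ebar τ + g (ebar τ) (κ (ebar τ))) :
    ebar N ⬝ᵥ P.mulVec (ebar N) ≤ ε ^ 2 :=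
  stmt_11_general n p L hL g hg P Qstar sqrtP hP hQstar hsqrtP hsq lam lamMinQ lamMaxP hlam hlamMinQ
    hlamMaxP hQP κ ε εr hεεr hκ N m hmN η hη0 hη hΥ u etil e ebar d hetil hterm he0 he hd hebar0
    hebar₁ hebar₂
end

section
/- Let V : ℕ → ℝ with V(k) ≥ 0 for all k, let e : ℕ → ℝⁿ, and let c > 0, b ≥ 0 be real numbers such that V(k+1) ≤ V(k) − c·‖e(k)‖² + b for every k ∈ ℕ. Then for every real r > 0 with c·r² > b, there exists k ∈ ℕ with k ≤ V(0)/(c·r² − b) such that ‖e(k)‖ ≤ r. -/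
/-! A uniform decrease `δ > 0` of a nonnegative `V` can happen at most `V 0 / δ` times in a row.
Away from the ball of radius `r` the decrease inequality gives exactly such a decrease, with
`δ = c r² - b`, so the error must enter the ball within `⌊V 0 / δ⌋₊` steps. -/

theorem le_sub_mul_of_forall_lt_le_sub {V : ℕ → ℝ} {δ : ℝ} {K : ℕ}
    (hdec : ∀ k < K, V (k + 1) ≤ V k - δ) : V K ≤ V 0 - K * δ := by
  induction K with
  | zero => simp
  | succ m ih =>
    have hm := ih fun k hk => hdec k (Nat.lt_succ_of_lt hk)
    have hstep := hdec m (Nat.lt_succ_self m)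
    push_cast
    linarith

theorem exists_le_div_of_not_imp_le_sub {V : ℕ → ℝ} (hV : ∀ k, 0 ≤ V k) {δ : ℝ} (hδ : 0 < δ)
    {P : ℕ → Prop} (hdec : ∀ k, ¬P k → V (k + 1) ≤ V k - δ) :
    ∃ k : ℕ, (k : ℝ) ≤ V 0 / δ ∧ P k := by
  by_contra! hnot
  set K := ⌊V 0 / δ⌋₊ + 1
  have hK : V 0 / δ < K := by simpa [K] using Nat.lt_floor_add_one (V 0 / δ)
  have hVK : V K ≤ V 0 - K * δ := le_sub_mul_of_forall_lt_le_sub fun k hk => by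
    refine hdec k (hnot k ?_)
    have : (k : ℝ) ≤ ⌊V 0 / δ⌋₊ := by exact_mod_cast Nat.lt_succ_iff.mp hk
    exact this.trans (Nat.floor_le (div_nonneg (hV 0) hδ.le))
  have : V 0 < K * δ := (div_lt_iff₀ hδ).mp hK
  linarith [hV K]

theorem stmt_13_general (n : ℕ) (V : ℕ → ℝ) (hV : ∀ k : ℕ, 0 ≤ V k)
    (e : ℕ → EuclideanSpace ℝ (Fin n)) (c b : ℝ) (hc : 0 < c)
    (h : ∀ k : ℕ, V (k + 1) ≤ V k - c * ‖e k‖ ^ 2 + b) :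
    ∀ r : ℝ, 0 < r → b < c * r ^ 2 →
      ∃ k : ℕ, (k : ℝ) ≤ V 0 / (c * r ^ 2 - b) ∧ ‖e k‖ ≤ r := by
  intro r hr hrb
  refine exists_le_div_of_not_imp_le_sub hV (sub_pos.mpr hrb) fun k hk => ?_
  have hsq : c * r ^ 2 ≤ c * ‖e k‖ ^ 2 :=
    mul_le_mul_of_nonneg_left (pow_le_pow_left₀ hr.le (not_le.mp hk).le 2) hc.le
  linarith [h k]

/-- finite-time convergence from a Lyapunov decrease inequality:
if `V ≥ 0` and `V(k+1) ≤ V(k) − c‖e(k)‖² + b`, then for any `r > 0` with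
`c·r² > b` there is `k ≤ V(0)/(c·r² − b)` with `‖e(k)‖ ≤ r`. -/
theorem stmt_13 (n : ℕ) (V : ℕ → ℝ) (hV : ∀ k : ℕ, 0 ≤ V k)
    (e : ℕ → EuclideanSpace ℝ (Fin n)) (c b : ℝ) (hc : 0 < c) (hb : 0 ≤ b)
    (h : ∀ k : ℕ, V (k + 1) ≤ V k - c * ‖e k‖ ^ 2 + b) :
    ∀ r : ℝ, 0 < r → b < c * r ^ 2 →
      ∃ k : ℕ, (k : ℝ) ≤ V 0 / (c * r ^ 2 - b) ∧ ‖e k‖ ≤ r :=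
  stmt_13_general n V hV e c b hc h
end

section
/- Let n, p ∈ ℕ with n ≥ 1, let L > 0, and let g : ℝⁿ × ℝᵖ → ℝⁿ satisfy ‖g(x,u) − g(y,u)‖ ≤ L‖x − y‖ for all x, y, u; define F(e,u) = e + g(e,u). Let Q, P be real symmetric positive-definite n×n matrices, R a real symmetric positive-semidefinite p×p matrix, K a real p×n matrix, and Q* = Q + KᵀRK. Let ε_r > 0 and suppose that for every e ∈ ℝⁿ with eᵀPe ≤ ε_r², F(e, Ke)ᵀ P F(e, Ke) ≤ eᵀPe − eᵀQ*e. Let S ⊆ ℝⁿ and L_Q, L_P ≥ 0 be such that for all x, y ∈ S, xᵀQx − yᵀQy ≤ L_Q‖x−y‖ and xᵀPx − yᵀPy ≤ L_P‖x−y‖. Let N ≥ 2, let (u_τ)_{τ=0}^{N−1} be inputs, and define: the nominal optimal trajectory ẽ₀ = e₀, ẽ_{τ+1} = F(ẽ_τ, u_τ) for 0 ≤ τ ≤ N−1; the actual next state e₁ = F(e₀, u₀) + d with ‖d‖ ≤ η; the candidate inputs ū_τ = u_{τ+1} for 0 ≤ τ ≤ N−2 and ū_{N−1} = K ē_{N−1};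 and the candidate trajectory ē₀ = e₁, ē_{τ+1} = F(ē_τ, ū_τ) for 0 ≤ τ ≤ N−1. Assume ē_{N−1}ᵀ P ē_{N−1} ≤ ε_r² and that ẽ_τ ∈ S for 1 ≤ τ ≤ N and ē_τ ∈ S for 0 ≤ τ ≤ N−1. Define the costs H̃ = Σ_{τ=0}^{N−1}(ẽ_τᵀQẽ_τ + u_τᵀRu_τ) + ẽ_NᵀPẽ_N and H̄ = Σ_{τ=0}^{N−1}(ē_τᵀQē_τ + ū_τᵀRū_τ) + ē_NᵀPē_N. Then H̄ − H̃ ≤ −e₀ᵀQe₀ − u₀ᵀRu₀ + [((1+L)^{N−1} − 1)/L · L_Q + (1+L)^{N−1} · L_P] · η. -/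
/-!
The candidate inputs reuse `u₁, …, u_{N-1}`, so the candidate trajectory `ē_τ` and the shifted
nominal trajectory `ẽ_{τ+1}` are driven by the same inputs. They start at distance `‖d‖ ≤ η`, and
since `x ↦ x + g x u` is `(1 + L)`-Lipschitz they stay within `(1 + L)^τ η` of each other. The
input costs of the two horizons then cancel except for `u₀` and the terminal input; the matched
state costs differ by at most `L_Q (1 + L)^τ η`, which sums to the geometric factor; and the
terminal decrease absorbs the last stage and terminal cost of the candidate, leaving a difference
of terminal costs bounded by `L_P (1 + L)^{N-1} η`.
-/

open Matrix

section Trajectories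

variable {E U : Type*} [SeminormedAddCommGroup E] {g : E → U → E} {L : ℝ}

theorem norm_step_sub_step_le (hg : ∀ x y u, ‖g x u - g y u‖ ≤ L * ‖x - y‖) (x y : E) (u : U) :
    ‖(x + g x u) - (y + g y u)‖ ≤ (1 + L) * ‖x - y‖ :=
  calc ‖(x + g x u) - (y + g y u)‖ = ‖(x - y) + (g x u - g y u)‖ := by rw [add_sub_add_comm]
    _ ≤ ‖x - y‖ + L * ‖x - y‖ := (norm_add_le _ _).trans (add_le_add_right (hg x y u) _)
    _ = (1 + L) * ‖x - y‖ := by ring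

theorem norm_sub_trajectories_le (hL : 0 ≤ L) (hg : ∀ x y u, ‖g x u - g y u‖ ≤ L * ‖x - y‖)
    {x y : ℕ → E} {v : ℕ → U} {M : ℕ}
    (hx : ∀ k < M, x (k + 1) = x k + g (x k) (v k))
    (hy : ∀ k < M, y (k + 1) = y k + g (y k) (v k)) :
    ∀ k ≤ M, ‖x k - y k‖ ≤ (1 + L) ^ k * ‖x 0 - y 0‖ := by
  intro k hk
  induction k with
  | zero => simp
  | succ k ih =>
    calc ‖x (k + 1) - y (k + 1)‖ ≤ (1 + L) * ‖x k - y k‖ := by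
          rw [hx k hk, hy k hk]; exact norm_step_sub_step_le hg _ _ _
      _ ≤ (1 + L) * ((1 + L) ^ k * ‖x 0 - y 0‖) := by gcongr; exact ih (by omega)
      _ = (1 + L) ^ (k + 1) * ‖x 0 - y 0‖ := by ring

end Trajectories

theorem sum_range_succ_sub_sum_range_succ_of_shift {M : ℕ} (a b c c' : ℕ → ℝ)
    (hc : ∀ τ < M, c τ = c' (τ + 1)) :
    ∑ τ ∈ Finset.range (M + 1), (a τ + c τ) - ∑ τ ∈ Finset.range (M + 1), (b τ + c' τ) =
      ∑ τ ∈ Finset.range M, (a τ - b (τ + 1)) + (a M + c M) - (b 0 + c' 0) := by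
  have hsum : ∑ τ ∈ Finset.range M, c τ = ∑ τ ∈ Finset.range M, c' (τ + 1) :=
    Finset.sum_congr rfl fun τ hτ => hc τ (Finset.mem_range.mp hτ)
  rw [Finset.sum_range_succ, Finset.sum_range_succ', Finset.sum_sub_distrib,
    Finset.sum_add_distrib, Finset.sum_add_distrib, hsum]
  ring

theorem Matrix.dotProduct_mulVec_transpose_mul_mul {m n α : Type*} [Fintype m] [Fintype n]
    [CommSemiring α] (K : Matrix m n α) (R : Matrix m m α) (x : n → α) :
    x ⬝ᵥ (Kᵀ * R * K) *ᵥ x = K *ᵥ x ⬝ᵥ R *ᵥ (K *ᵥ x) := by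
  rw [← mulVec_mulVec, ← mulVec_mulVec, dotProduct_mulVec, vecMul_transpose]

theorem shifted_cost_sub_cost_le {E U : Type*} [SeminormedAddCommGroup E] {g : E → U → E}
    {L : ℝ} (hL : 0 < L) (hg : ∀ x y u, ‖g x u - g y u‖ ≤ L * ‖x - y‖)
    {q p : E → ℝ} {r : U → ℝ} {S : Set E} {LQ LP : ℝ} (hLQ : 0 ≤ LQ) (hLP : 0 ≤ LP)
    (hq : ∀ x ∈ S, ∀ y ∈ S, q x - q y ≤ LQ * ‖x - y‖)
    (hp : ∀ x ∈ S, ∀ y ∈ S, p x - p y ≤ LP * ‖x - y‖)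
    {M : ℕ} {u ubar : ℕ → U} {etil ebar : ℕ → E} {η : ℝ}
    (hetil : ∀ τ ≤ M, etil (τ + 1) = etil τ + g (etil τ) (u τ))
    (hebar : ∀ τ < M, ebar (τ + 1) = ebar τ + g (ebar τ) (ubar τ))
    (hubar : ∀ τ < M, ubar τ = u (τ + 1))
    (hη : ‖ebar 0 - etil 1‖ ≤ η)
    (hterm : q (ebar M) + r (ubar M) + p (ebar (M + 1)) ≤ p (ebar M))
    (hetilS : ∀ τ ≤ M, etil (τ + 1) ∈ S) (hebarS : ∀ τ ≤ M, ebar τ ∈ S) :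
    (∑ τ ∈ Finset.range (M + 1), (q (ebar τ) + r (ubar τ)) + p (ebar (M + 1))) -
      (∑ τ ∈ Finset.range (M + 1), (q (etil τ) + r (u τ)) + p (etil (M + 1))) ≤
      -q (etil 0) - r (u 0) + (((1 + L) ^ M - 1) / L * LQ + (1 + L) ^ M * LP) * η := by
  have hdist : ∀ τ ≤ M, ‖ebar τ - etil (τ + 1)‖ ≤ (1 + L) ^ τ * η := by
    intro τ hτ
    have hshift : ∀ k < M, etil (k + 1 + 1) = etil (k + 1) + g (etil (k + 1)) (ubar k) :=
      fun k hk => by rw [hetil (k + 1) hk, hubar k hk]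
    calc ‖ebar τ - etil (τ + 1)‖ ≤ (1 + L) ^ τ * ‖ebar 0 - etil 1‖ :=
          norm_sub_trajectories_le (y := fun k => etil (k + 1)) hL.le hg hebar hshift τ hτ
      _ ≤ (1 + L) ^ τ * η := by gcongr
  have hstage : ∑ τ ∈ Finset.range M, (q (ebar τ) - q (etil (τ + 1))) ≤
      ((1 + L) ^ M - 1) / L * LQ * η := by
    calc ∑ τ ∈ Finset.range M, (q (ebar τ) - q (etil (τ + 1)))
        ≤ ∑ τ ∈ Finset.range M, LQ * η * (1 + L) ^ τ := by
          refine Finset.sum_le_sum fun τ hτ => ?_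
          have hτ : τ < M := Finset.mem_range.mp hτ
          calc q (ebar τ) - q (etil (τ + 1)) ≤ LQ * ‖ebar τ - etil (τ + 1)‖ :=
                hq _ (hebarS τ hτ.le) _ (hetilS τ hτ.le)
            _ ≤ LQ * ((1 + L) ^ τ * η) := by gcongr; exact hdist τ hτ.le
            _ = LQ * η * (1 + L) ^ τ := by ring
      _ = ((1 + L) ^ M - 1) / L * LQ * η := by
          rw [← Finset.mul_sum, geom_sum_eq (by linarith), add_sub_cancel_left]; ring
  have hterminal : p (ebar M) - p (etil (M + 1)) ≤ (1 + L) ^ M * LP * η :=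
    calc p (ebar M) - p (etil (M + 1)) ≤ LP * ‖ebar M - etil (M + 1)‖ :=
          hp _ (hebarS M le_rfl) _ (hetilS M le_rfl)
      _ ≤ LP * ((1 + L) ^ M * η) := by gcongr; exact hdist M le_rfl
      _ = (1 + L) ^ M * LP * η := by ring
  have hcost := sum_range_succ_sub_sum_range_succ_of_shift (fun τ => q (ebar τ))
    (fun τ => q (etil τ)) (fun τ => r (ubar τ)) (fun τ => r (u τ)) fun τ hτ => by rw [hubar τ hτ]
  linarith

theorem stmt_15_general (n p : ℕ) (L : ℝ) (hL : 0 < L)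
    (g : EuclideanSpace ℝ (Fin n) → EuclideanSpace ℝ (Fin p) → EuclideanSpace ℝ (Fin n))
    (hg : ∀ x y : EuclideanSpace ℝ (Fin n), ∀ u : EuclideanSpace ℝ (Fin p),
      ‖g x u - g y u‖ ≤ L * ‖x - y‖)
    (Q P : Matrix (Fin n) (Fin n) ℝ)
    (R : Matrix (Fin p) (Fin p) ℝ)
    (K : Matrix (Fin p) (Fin n) ℝ)
    (Qstar : Matrix (Fin n) (Fin n) ℝ) (hQstar : Qstar = Q + Kᵀ * R * K)
    (εr : ℝ)
    (htermdec : ∀ e : EuclideanSpace ℝ (Fin n), e ⬝ᵥ P.mulVec e ≤ εr ^ 2 →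
      (e + g e (WithLp.toLp 2 (K.mulVec e))) ⬝ᵥ P.mulVec (e + g e (WithLp.toLp 2 (K.mulVec e))) ≤
        e ⬝ᵥ P.mulVec e - e ⬝ᵥ Qstar.mulVec e)
    (S : Set (EuclideanSpace ℝ (Fin n))) (LQ LP : ℝ) (hLQ : 0 ≤ LQ) (hLP : 0 ≤ LP)
    (hQlip : ∀ x ∈ S, ∀ y ∈ S,
      x ⬝ᵥ Q.mulVec x - y ⬝ᵥ Q.mulVec y ≤ LQ * ‖x - y‖)
    (hPlip : ∀ x ∈ S, ∀ y ∈ S,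
      x ⬝ᵥ P.mulVec x - y ⬝ᵥ P.mulVec y ≤ LP * ‖x - y‖)
    (N : ℕ) (hN : 2 ≤ N)
    (u : ℕ → EuclideanSpace ℝ (Fin p))
    (e₀ : EuclideanSpace ℝ (Fin n))
    (etil : ℕ → EuclideanSpace ℝ (Fin n))
    (hetil0 : etil 0 = e₀)
    (hetil : ∀ τ < N, etil (τ + 1) = etil τ + g (etil τ) (u τ))
    (η : ℝ) (d e₁ : EuclideanSpace ℝ (Fin n)) (hd : ‖d‖ ≤ η)
    (he₁ : e₁ = e₀ + g e₀ (u 0) + d)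
    (ubar : ℕ → EuclideanSpace ℝ (Fin p))
    (ebar : ℕ → EuclideanSpace ℝ (Fin n))
    (hubar₁ : ∀ τ < N - 1, ubar τ = u (τ + 1))
    (hubar₂ : ubar (N - 1) = K.mulVec (ebar (N - 1)))
    (hebar0 : ebar 0 = e₁)
    (hebar : ∀ τ < N, ebar (τ + 1) = ebar τ + g (ebar τ) (ubar τ))
    (hterm : ebar (N - 1) ⬝ᵥ P.mulVec (ebar (N - 1)) ≤ εr ^ 2)
    (hetilS : ∀ τ, 1 ≤ τ → τ ≤ N → etil τ ∈ S)
    (hebarS : ∀ τ ≤ N - 1, ebar τ ∈ S) :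
    (∑ τ ∈ Finset.range N,
        (ebar τ ⬝ᵥ Q.mulVec (ebar τ) + ubar τ ⬝ᵥ R.mulVec (ubar τ)) +
      ebar N ⬝ᵥ P.mulVec (ebar N)) -
    (∑ τ ∈ Finset.range N,
        (etil τ ⬝ᵥ Q.mulVec (etil τ) + u τ ⬝ᵥ R.mulVec (u τ)) +
      etil N ⬝ᵥ P.mulVec (etil N)) ≤
    -(e₀ ⬝ᵥ Q.mulVec e₀) - u 0 ⬝ᵥ R.mulVec (u 0) +
      (((1 + L) ^ (N - 1) - 1) / L * LQ + (1 + L) ^ (N - 1) * LP) * η := by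
  obtain ⟨M, rfl⟩ : ∃ M, N = M + 1 := ⟨N - 1, by omega⟩
  simp only [Nat.add_sub_cancel] at hubar₁ hubar₂ hterm hebarS ⊢
  have hη : ‖ebar 0 - etil 1‖ ≤ η := by
    rwa [hebar0, he₁, hetil 0 (by omega), hetil0, add_sub_cancel_left]
  have hterminal : ebar M ⬝ᵥ Q *ᵥ ebar M + ubar M ⬝ᵥ R *ᵥ ubar M +
      ebar (M + 1) ⬝ᵥ P *ᵥ ebar (M + 1) ≤ ebar M ⬝ᵥ P *ᵥ ebar M := by
    have hdec := htermdec (ebar M) hterm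
    rw [hQstar, add_mulVec, dotProduct_add, dotProduct_mulVec_transpose_mul_mul, ← hubar₂,
      WithLp.toLp_ofLp, WithLp.ofLp_add] at hdec
    rw [hebar M M.lt_succ_self, WithLp.ofLp_add]
    linarith
  rw [← hetil0]
  exact shifted_cost_sub_cost_le (q := fun x => x ⬝ᵥ Q *ᵥ x) (p := fun x => x ⬝ᵥ P *ᵥ x)
    (r := fun v => v ⬝ᵥ R *ᵥ v) hL hg hLQ hLP hQlip hPlip (fun τ hτ => hetil τ (by omega))
    (fun τ hτ => hebar τ (by omega)) hubar₁ hη hterminal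
    (fun τ hτ => hetilS (τ + 1) (by omega) (by omega)) hebarS

/-- one-step cost-decrease estimate at the heart of Theorem 1:
the candidate cost after one disturbed step, using the shifted previous
optimal inputs plus the terminal feedback `K`, exceeds the previous optimal
cost by at most `−‖e₀‖²_Q − ‖u₀‖²_R + ψ(1)·η` with
`ψ(1) = ((1+L)^{N−1}−1)/L · L_Q + (1+L)^{N−1} · L_P`. -/
theorem stmt_15 (n p : ℕ) (hn : 1 ≤ n) (L : ℝ) (hL : 0 < L)
    (g : EuclideanSpace ℝ (Fin n) → EuclideanSpace ℝ (Fin p) → EuclideanSpace ℝ (Fin n))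
    (hg : ∀ x y : EuclideanSpace ℝ (Fin n), ∀ u : EuclideanSpace ℝ (Fin p),
      ‖g x u - g y u‖ ≤ L * ‖x - y‖)
    (Q P : Matrix (Fin n) (Fin n) ℝ) (hQ : Q.PosDef) (hP : P.PosDef)
    (R : Matrix (Fin p) (Fin p) ℝ) (hR : R.PosSemidef)
    (K : Matrix (Fin p) (Fin n) ℝ)
    (Qstar : Matrix (Fin n) (Fin n) ℝ) (hQstar : Qstar = Q + Kᵀ * R * K)
    (εr : ℝ) (hεr : 0 < εr)
    (htermdec : ∀ e : EuclideanSpace ℝ (Fin n), e ⬝ᵥ P.mulVec e ≤ εr ^ 2 →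
      (e + g e (WithLp.toLp 2 (K.mulVec e))) ⬝ᵥ P.mulVec (e + g e (WithLp.toLp 2 (K.mulVec e))) ≤
        e ⬝ᵥ P.mulVec e - e ⬝ᵥ Qstar.mulVec e)
    (S : Set (EuclideanSpace ℝ (Fin n))) (LQ LP : ℝ) (hLQ : 0 ≤ LQ) (hLP : 0 ≤ LP)
    (hQlip : ∀ x ∈ S, ∀ y ∈ S,
      x ⬝ᵥ Q.mulVec x - y ⬝ᵥ Q.mulVec y ≤ LQ * ‖x - y‖)
    (hPlip : ∀ x ∈ S, ∀ y ∈ S,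
      x ⬝ᵥ P.mulVec x - y ⬝ᵥ P.mulVec y ≤ LP * ‖x - y‖)
    (N : ℕ) (hN : 2 ≤ N)
    (u : ℕ → EuclideanSpace ℝ (Fin p))
    (e₀ : EuclideanSpace ℝ (Fin n))
    (etil : ℕ → EuclideanSpace ℝ (Fin n))
    (hetil0 : etil 0 = e₀)
    (hetil : ∀ τ < N, etil (τ + 1) = etil τ + g (etil τ) (u τ))
    (η : ℝ) (d e₁ : EuclideanSpace ℝ (Fin n)) (hd : ‖d‖ ≤ η)
    (he₁ : e₁ = e₀ + g e₀ (u 0) + d)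
    (ubar : ℕ → EuclideanSpace ℝ (Fin p))
    (ebar : ℕ → EuclideanSpace ℝ (Fin n))
    (hubar₁ : ∀ τ < N - 1, ubar τ = u (τ + 1))
    (hubar₂ : ubar (N - 1) = K.mulVec (ebar (N - 1)))
    (hebar0 : ebar 0 = e₁)
    (hebar : ∀ τ < N, ebar (τ + 1) = ebar τ + g (ebar τ) (ubar τ))
    (hterm : ebar (N - 1) ⬝ᵥ P.mulVec (ebar (N - 1)) ≤ εr ^ 2)
    (hetilS : ∀ τ, 1 ≤ τ → τ ≤ N → etil τ ∈ S)
    (hebarS : ∀ τ ≤ N - 1, ebar τ ∈ S) :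
    (∑ τ ∈ Finset.range N,
        (ebar τ ⬝ᵥ Q.mulVec (ebar τ) + ubar τ ⬝ᵥ R.mulVec (ubar τ)) +
      ebar N ⬝ᵥ P.mulVec (ebar N)) -
    (∑ τ ∈ Finset.range N,
        (etil τ ⬝ᵥ Q.mulVec (etil τ) + u τ ⬝ᵥ R.mulVec (u τ)) +
      etil N ⬝ᵥ P.mulVec (etil N)) ≤
    -(e₀ ⬝ᵥ Q.mulVec e₀) - u 0 ⬝ᵥ R.mulVec (u 0) +
      (((1 + L) ^ (N - 1) - 1) / L * LQ + (1 + L) ^ (N - 1) * LP) * η :=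
  stmt_15_general n p L hL g hg Q P R K Qstar hQstar εr htermdec S LQ LP hLQ hLP hQlip hPlip N hN u
    e₀ etil hetil0 hetil η d e₁ hd he₁ ubar ebar hubar₁ hubar₂ hebar0 hebar hterm hetilS hebarS
end
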